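/- Fix b₀ > 0, θ₀ = arctan b₀, δ, δ₀, α ∈ (0, 1), and L ≥ 4. Let Q = {y ∈ ℝ³ : y₁ > 0, y₃ > b₀y₁} and Q_L = Q ∩ {r < L} (r = √(y₁²+y₃²)). Let f ∈ H^{(1−δ,2−δ₀)}_{0,α}(Q) be 2π-periodic in y₂, and write f(r, θ, y₂) in cylindrical coordinates y₁ = r cos θ, y₃ = r sin θ. For m ≥ 1 set μ_m = (mπ/(π/2 − θ₀))², f_{m0}(r) = (1/(π(π/2 − θ₀)))·∫_{θ₀}^{π/2}∫₀^{2π} f(r, θ, y₂) cos(√μ_m (θ − θ₀)) dy₂ dθ, and R_{m0}(r) = −r^{√μ_m} L^{−2√μ_m} ∫₀^{L} η^{2√μ_m − 1} ( ∫_η^{L} ξ^{1 − √μ_m} f_{m0}(ξ) dξ ) dη − r^{−√μ_m} ∫₀^{r} η^{2√μ_m − 1} ( ∫_η^{L} ξ^{1 − √μ_m} f_{m0}(ξ) dξ ) dη. Then the series I₁(r, θ) = Σ_{m=1}^{∞} R_{m0}(r) cos(√μ_m (θ − θ₀)) converges absolutely for 0 < r ≤ L, and there is a constant C depending only on θ₀,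 δ, δ₀ (in particular independent of L and f) such that sup_{0<r≤1, θ∈[θ₀,π/2]} |I₁(r,θ)| + sup_{1<r≤L, θ∈[θ₀,π/2]} r^{−δ₀}|I₁(r,θ)| ≤ C·‖f‖^{(1−δ,2−δ₀)}_{0,α;Q}. -/

import Mathlib

noncomputable section

open Real Set Filter MeasureTheory Topology

/-- Points of `ℝ³` (Euclidean). -/
abbrev V3 : Type := EuclideanSpace ℝ (Fin 3)

/-- `r_x = √(x₁² + x₃²)`, the distance of `x` to the `x₂`-axis. -/
def rx (x : V3) : ℝ := Real.sqrt (x 0 ^ 2 + x 2 ^ 2)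

/-- The edge `{x₁ = x₃ = 0}` (the `x₂`-axis). -/
def edge : Set V3 := {x : V3 | x 0 = 0 ∧ x 2 = 0}

/-- The infinite wedge `Q = {y₁ > 0, y₃ > b₀y₁}`. -/
def wedgeQ (b₀ : ℝ) : Set V3 := {y : V3 | 0 < y 0 ∧ b₀ * y 0 < y 2}

/-- The truncated wedge `Q_L = Q ∩ {r < L}`. -/
def wedgeQL (b₀ L : ℝ) : Set V3 := {y ∈ wedgeQ b₀ | rx y < L}

/-- `Q̄ ∖ edge`, the natural regularity set for functions on the wedge. -/
def SQ (b₀ : ℝ) : Set V3 := closure (wedgeQ b₀) \ edge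

/-- `Q̄_L ∖ edge`. -/
def SL (b₀ L : ℝ) : Set V3 := closure (wedgeQL b₀ L) \ edge

/-- Partial derivative within `S` in the `i`-th coordinate direction. -/
def pdW (S : Set V3) (i : Fin 3) (u : V3 → ℝ) (x : V3) : ℝ :=
  fderivWithin ℝ u S x (EuclideanSpace.single i 1)

/-- Laplacian of `u` at `x` (derivatives taken within `S`). -/
def lapW (S : Set V3) (u : V3 → ℝ) (x : V3) : ℝ :=
  ∑ i : Fin 3, pdW S i (pdW S i u) x

/-- `2π`-periodicity in `y₂`, on the set `D`. -/
def Per2On (D : Set V3) (u : V3 → ℝ) : Prop :=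
  ∀ y ∈ D, u (y + EuclideanSpace.single 1 (2 * Real.pi)) = u y

/-- All weighted sup quantities entering `Σ_{j≤m}[u]^{(k,l)}_{j,0;D}` are `≤ M`
(derivatives taken within `S`). -/
def wsupLE (S : Set V3) (m : ℕ) (k l : ℝ) (D : Set V3) (u : V3 → ℝ) (M : ℝ) : Prop :=
  (∀ j : ℕ, j ≤ m → ∀ x ∈ D, 0 < rx x → rx x < 1 →
      rx x ^ max (k + j) 0 * ‖iteratedFDerivWithin ℝ j u S x‖ ≤ M) ∧
  (∀ j : ℕ, j ≤ m → ∀ x ∈ D, 1 < rx x →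
      rx x ^ (l + j) * ‖iteratedFDerivWithin ℝ j u S x‖ ≤ M)

/-- All quantities entering the weighted Hölder norm `‖u‖^{(k,l)}_{m,α;D}` are `≤ M`
(derivatives taken within `S`). -/
def wnormLE (S : Set V3) (m : ℕ) (α k l : ℝ) (D : Set V3) (u : V3 → ℝ) (M : ℝ) : Prop :=
  wsupLE S m k l D u M ∧
  (∀ x ∈ D, ∀ y ∈ D, 0 < min (rx x) (rx y) → min (rx x) (rx y) < 1 →
      min (rx x) (rx y) ^ max (k + m + α) 0 *
        ‖iteratedFDerivWithin ℝ m u S x - iteratedFDerivWithin ℝ m u S y‖ ≤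
        M * ‖x - y‖ ^ α) ∧
  (∀ x ∈ D, ∀ y ∈ D, 1 < min (rx x) (rx y) →
      min (rx x) (rx y) ^ (l + m + α) *
        ‖iteratedFDerivWithin ℝ m u S x - iteratedFDerivWithin ℝ m u S y‖ ≤
        M * ‖x - y‖ ^ α)

/-- Membership in the weighted Hölder space `H^{(k,l)}_{m,α}(D)`. -/
def memH (S : Set V3) (m : ℕ) (α k l : ℝ) (D : Set V3) (u : V3 → ℝ) : Prop :=
  ContDiffOn ℝ m u S ∧ ∃ M : ℝ, 0 ≤ M ∧ wnormLE S m α k l D u M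

/-- The point of `ℝ³` with cylindrical coordinates `(r, θ, y₂)`:
`(r cos θ, y₂, r sin θ)`. -/
def mk3 (a b c : ℝ) : V3 := (WithLp.equiv 2 (Fin 3 → ℝ)).symm ![a, b, c]

/-- `f` written in cylindrical coordinates: `f(r cos θ, y₂, r sin θ)`. -/
def fPolar (f : V3 → ℝ) (r θ y₂ : ℝ) : ℝ := f (mk3 (r * Real.cos θ) y₂ (r * Real.sin θ))

/-- `√μ_m = mπ/(π/2 − θ₀)`, where `θ₀ = arctan b₀`. -/
def sqrtmu (b₀ : ℝ) (m : ℕ) : ℝ := m * Real.pi / (Real.pi / 2 - Real.arctan b₀)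

/-- The Fourier coefficient `f_{m0}(r)` of `f` in the basis `cos(√μ_m(θ − θ₀))`. -/
def fm0 (b₀ : ℝ) (f : V3 → ℝ) (m : ℕ) (r : ℝ) : ℝ :=
  (Real.pi * (Real.pi / 2 - Real.arctan b₀))⁻¹ *
    ∫ θ in (Real.arctan b₀)..(Real.pi / 2), ∫ y₂ in (0:ℝ)..(2 * Real.pi),
      fPolar f r θ y₂ * Real.cos (sqrtmu b₀ m * (θ - Real.arctan b₀))

/-- The radial mode `R_{m0}(r)` of (4.24), solving
`R'' − r^{−2}μ_m R + r^{−1}R' = f_{m0}` with `R'(L) = 0` and `R` bounded at `r = 0`. -/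
def Rm0 (b₀ L : ℝ) (f : V3 → ℝ) (m : ℕ) (r : ℝ) : ℝ :=
  -(r ^ sqrtmu b₀ m * L ^ (-(2 * sqrtmu b₀ m)) *
      ∫ η in (0:ℝ)..L, η ^ (2 * sqrtmu b₀ m - 1) *
        ∫ ξ in η..L, ξ ^ (1 - sqrtmu b₀ m) * fm0 b₀ f m ξ) -
    r ^ (-sqrtmu b₀ m) *
      ∫ η in (0:ℝ)..r, η ^ (2 * sqrtmu b₀ m - 1) *
        ∫ ξ in η..L, ξ ^ (1 - sqrtmu b₀ m) * fm0 b₀ f m ξ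

/-!
The weighted sup bound on `f` says `|f| ≤ M w(r)` for the broken power law `w` equal to
`r^(δ-1)` for `r ≤ 1` and to `r^(δ₀-2)` for `r ≥ 1`, hence `|f_{m0}| ≤ 2M w`.  The two nested
integrals defining `R_{m0}` integrate broken power laws whose exponents stay at distance at least
`κ = √μ_m - 2` from the critical exponent `-1`, so each integration raises both exponents by one
at the cost of a factor `2/κ`.  This gives
`|R_{m0}(r)| ≤ 16M/(√μ_m - 2)² · min(r,1)^(δ+1) max(r,1)^δ₀`, and `√μ_m - 2 ≥ m(√μ₁ - 2)` with
`√μ₁ > 2` (because `θ₀ > 0`) makes the modes decay like `m⁻²`.  Summing against `|cos| ≤ 1` gives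
the bound with `C = 16/(√μ₁ - 2)² · π²/6`.
-/

def brokenPow (a b r : ℝ) : ℝ := min r 1 ^ a * max r 1 ^ b

section BrokenPow

variable {a b c κ r s t : ℝ}

lemma brokenPow_of_le_one (hr : r ≤ 1) : brokenPow a b r = r ^ a := by
  rw [brokenPow, min_eq_left hr, max_eq_right hr, one_rpow, mul_one]

lemma brokenPow_of_one_le (hr : 1 ≤ r) : brokenPow a b r = r ^ b := by
  rw [brokenPow, min_eq_right hr, max_eq_left hr, one_rpow, one_mul]

lemma brokenPow_nonneg (hr : 0 ≤ r) : 0 ≤ brokenPow a b r :=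
  mul_nonneg (rpow_nonneg (le_min hr zero_le_one) _)
    (rpow_nonneg (zero_le_one.trans (le_max_right r 1)) _)

lemma continuousAt_brokenPow (hr : 0 < r) : ContinuousAt (brokenPow a b) r :=
  ((continuous_id.min continuous_const).continuousAt.rpow_const
      (Or.inl (lt_min hr one_pos).ne')).mul
    ((continuous_id.max continuous_const).continuousAt.rpow_const
      (Or.inl (one_pos.trans_le (le_max_right r 1)).ne'))

lemma rpow_mul_brokenPow (hr : 0 < r) :
    r ^ c * brokenPow a b r = brokenPow (c + a) (c + b) r := by
  rcases le_total r 1 with h | h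
  · rw [brokenPow_of_le_one h, brokenPow_of_le_one h, rpow_add hr]
  · rw [brokenPow_of_one_le h, brokenPow_of_one_le h, rpow_add hr]

lemma brokenPow_le_brokenPow_of_nonpos (ha : a ≤ 0) (hb : b ≤ 0) (hr : 0 < r) (hrs : r ≤ s) :
    brokenPow a b s ≤ brokenPow a b r :=
  mul_le_mul (rpow_le_rpow_of_nonpos (lt_min hr one_pos) (min_le_min_right 1 hrs) ha)
    (rpow_le_rpow_of_nonpos (one_pos.trans_le (le_max_right r 1)) (max_le_max_right 1 hrs) hb)
    (rpow_nonneg (zero_le_one.trans (le_max_right s 1)) _)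
    (rpow_nonneg (le_min hr.le zero_le_one) _)

lemma intervalIntegrable_brokenPow (hs : 0 < s) (ht : 0 < t) :
    IntervalIntegrable (brokenPow a b) volume s t :=
  ContinuousOn.intervalIntegrable fun _ hx =>
    (continuousAt_brokenPow (lt_min hs ht |>.trans_le hx.1)).continuousWithinAt

lemma intervalIntegrable_brokenPow_zero (ha : -1 < a) (ht : 0 < t) :
    IntervalIntegrable (brokenPow a b) volume 0 t := by
  have h01 : IntervalIntegrable (brokenPow a b) volume 0 1 :=
    (intervalIntegral.intervalIntegrable_rpow' ha).congr
      (fun x hx => (brokenPow_of_le_one (by simpa using hx.2 : x ≤ 1)).symm)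
  exact h01.trans (intervalIntegrable_brokenPow one_pos ht)

lemma integral_rpow_le_left_div (hκ : 0 < κ) (hc : c ≤ -1 - κ) (hs : 0 < s) (hst : s ≤ t) :
    ∫ x in s..t, x ^ c ≤ s ^ (c + 1) / κ := by
  have h0 : (0:ℝ) ∉ uIcc s t := by rw [uIcc_of_le hst]; exact fun h => hs.not_ge h.1
  rw [integral_rpow (Or.inr ⟨by linarith, h0⟩), ← neg_div_neg_eq, neg_sub]
  calc (s ^ (c + 1) - t ^ (c + 1)) / -(c + 1) ≤ s ^ (c + 1) / -(c + 1) := by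
        gcongr
        · linarith
        · linarith [rpow_nonneg (hs.le.trans hst) (c + 1)]
    _ ≤ s ^ (c + 1) / κ := by
        gcongr
        linarith

lemma integral_rpow_le_right_div (hκ : 0 < κ) (hc : -1 + κ ≤ c) (hs : 0 ≤ s) (hst : s ≤ t) :
    ∫ x in s..t, x ^ c ≤ t ^ (c + 1) / κ := by
  rw [integral_rpow (Or.inl (by linarith))]
  calc (t ^ (c + 1) - s ^ (c + 1)) / (c + 1) ≤ t ^ (c + 1) / (c + 1) := by
        gcongr
        · linarith
        · linarith [rpow_nonneg hs (c + 1)]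
    _ ≤ t ^ (c + 1) / κ := by
        gcongr
        · exact rpow_nonneg (hs.trans hst) _
        · linarith

lemma integral_brokenPow_of_le_one (hst : s ≤ t) (ht : t ≤ 1) :
    ∫ x in s..t, brokenPow a b x = ∫ x in s..t, x ^ a :=
  intervalIntegral.integral_congr fun _ hx =>
    brokenPow_of_le_one (((uIcc_of_le hst) ▸ hx).2.trans ht)

lemma integral_brokenPow_of_one_le (hs : 1 ≤ s) (hst : s ≤ t) :
    ∫ x in s..t, brokenPow a b x = ∫ x in s..t, x ^ b :=
  intervalIntegral.integral_congr fun _ hx =>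
    brokenPow_of_one_le (hs.trans ((uIcc_of_le hst) ▸ hx).1)

lemma integral_brokenPow_tail_le (hκ : 0 < κ) (ha : a ≤ -1 - κ) (hb : b ≤ -1 - κ)
    (hs : 0 < s) (hst : s ≤ t) (ht : 1 ≤ t) :
    ∫ x in s..t, brokenPow a b x ≤ 2 / κ * brokenPow (a + 1) (b + 1) s := by
  rcases le_or_gt 1 s with hs1 | hs1
  · rw [integral_brokenPow_of_one_le hs1 hst, brokenPow_of_one_le hs1]
    have hint := integral_rpow_le_left_div hκ hb hs hst
    have hnonneg : 0 ≤ s ^ (b + 1) / κ := div_nonneg (rpow_nonneg hs.le _) hκ.le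
    linarith [show 2 / κ * s ^ (b + 1) = s ^ (b + 1) / κ + s ^ (b + 1) / κ by ring]
  · have h1 : 1 ≤ s ^ (a + 1) := one_le_rpow_of_pos_of_le_one_of_nonpos hs hs1.le (by linarith)
    rw [← intervalIntegral.integral_add_adjacent_intervals (intervalIntegrable_brokenPow hs one_pos)
      (intervalIntegrable_brokenPow one_pos (hs.trans_le hst)),
      integral_brokenPow_of_le_one hs1.le le_rfl, integral_brokenPow_of_one_le le_rfl ht,
      brokenPow_of_le_one hs1.le]
    have hnear := integral_rpow_le_left_div hκ ha hs hs1.le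
    have hfar := integral_rpow_le_left_div hκ hb one_pos ht
    rw [one_rpow] at hfar
    have hone : 1 / κ ≤ s ^ (a + 1) / κ := by gcongr
    linarith [show 2 / κ * s ^ (a + 1) = s ^ (a + 1) / κ + s ^ (a + 1) / κ by ring]

lemma integral_brokenPow_head_le (hκ : 0 < κ) (ha : -1 + κ ≤ a) (hb : -1 + κ ≤ b) (ht : 0 < t) :
    ∫ x in (0:ℝ)..t, brokenPow a b x ≤ 2 / κ * brokenPow (a + 1) (b + 1) t := by
  rcases le_or_gt t 1 with ht1 | ht1
  · rw [integral_brokenPow_of_le_one ht.le ht1, brokenPow_of_le_one ht1]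
    have hint := integral_rpow_le_right_div hκ ha le_rfl ht.le
    have hnonneg : 0 ≤ t ^ (a + 1) / κ := div_nonneg (rpow_nonneg ht.le _) hκ.le
    linarith [show 2 / κ * t ^ (a + 1) = t ^ (a + 1) / κ + t ^ (a + 1) / κ by ring]
  · have h1 : 1 ≤ t ^ (b + 1) := one_le_rpow ht1.le (by linarith)
    rw [← intervalIntegral.integral_add_adjacent_intervals
      (intervalIntegrable_brokenPow_zero (by linarith) one_pos)
      (intervalIntegrable_brokenPow one_pos ht),
      integral_brokenPow_of_le_one zero_le_one le_rfl, integral_brokenPow_of_one_le le_rfl ht1.le,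
      brokenPow_of_one_le ht1.le]
    have hnear := integral_rpow_le_right_div hκ ha le_rfl zero_le_one
    have hfar := integral_rpow_le_right_div hκ hb zero_le_one ht1.le
    rw [one_rpow] at hnear
    have hone : 1 / κ ≤ t ^ (b + 1) / κ := by gcongr
    linarith [show 2 / κ * t ^ (b + 1) = t ^ (b + 1) / κ + t ^ (b + 1) / κ by ring]

end BrokenPow

lemma hasSum_div_succ_sq (B : ℝ) :
    HasSum (fun m : ℕ => B / ((m : ℝ) + 1) ^ 2) (B * (π ^ 2 / 6)) := by
  have h := ((hasSum_nat_add_iff' 1).2 hasSum_zeta_two).mul_left B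
  simpa [div_eq_mul_inv] using h

lemma summable_abs_of_abs_le_div_succ_sq {a : ℕ → ℝ} {B : ℝ}
    (ha : ∀ m, |a m| ≤ B / ((m : ℝ) + 1) ^ 2) : Summable fun m => |a m| :=
  (hasSum_div_succ_sq B).summable.of_nonneg_of_le (fun _ => abs_nonneg _) ha

lemma abs_tsum_mul_le_of_abs_le_div_succ_sq {a c : ℕ → ℝ} {B : ℝ}
    (ha : ∀ m, |a m| ≤ B / ((m : ℝ) + 1) ^ 2) (hc : ∀ m, |c m| ≤ 1) :
    |∑' m, a m * c m| ≤ B * (π ^ 2 / 6) :=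
  tsum_of_norm_bounded (hasSum_div_succ_sq B) fun m => by
    rw [Real.norm_eq_abs, abs_mul]
    exact (mul_le_of_le_one_right (abs_nonneg _) (hc m)).trans (ha m)

def radialPotential (ν L : ℝ) (F : ℝ → ℝ) (t : ℝ) : ℝ :=
  ∫ η in (0:ℝ)..t, η ^ (2 * ν - 1) * ∫ ξ in η..L, ξ ^ (1 - ν) * F ξ

-- `Rm0 b₀ L f m` unfolds to `radialSolution (sqrtmu b₀ m) L (fm0 b₀ f m)`.
def radialSolution (ν L : ℝ) (F : ℝ → ℝ) (r : ℝ) : ℝ :=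
  -(r ^ ν * L ^ (-(2 * ν)) * radialPotential ν L F L) - r ^ (-ν) * radialPotential ν L F r

section Radial

variable {ν κ p q L M t r : ℝ} {F : ℝ → ℝ}

lemma abs_radialPotential_le (hκ : 0 < κ) (hp : κ ≤ ν - p - 2) (hq : κ ≤ ν - q - 2)
    (hp' : κ ≤ ν + p + 2) (hq' : κ ≤ ν + q + 2) (hL : 1 ≤ L) (hM : 0 ≤ M)
    (hF : ∀ ξ, 0 < ξ → |F ξ| ≤ M * brokenPow p q ξ) (ht : 0 < t) (htL : t ≤ L) :
    |radialPotential ν L F t| ≤ M * (2 / κ) * (2 / κ) * brokenPow (ν + p + 2) (ν + q + 2) t := by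
  have hinner : ∀ η, 0 < η → η ≤ L → |∫ ξ in η..L, ξ ^ (1 - ν) * F ξ| ≤
      M * (2 / κ) * brokenPow (p + 2 - ν) (q + 2 - ν) η := by
    intro η hη hηL
    have hbound : ∀ ξ ∈ Ioc η L,
        ‖ξ ^ (1 - ν) * F ξ‖ ≤ M * brokenPow (1 - ν + p) (1 - ν + q) ξ := by
      intro ξ hξ
      have hξ : 0 < ξ := hη.trans hξ.1
      rw [Real.norm_eq_abs, abs_mul, abs_of_pos (rpow_pos_of_pos hξ _), ← rpow_mul_brokenPow hξ,
        mul_left_comm]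
      exact mul_le_mul_of_nonneg_left (hF ξ hξ) (rpow_nonneg hξ.le _)
    have htail := integral_brokenPow_tail_le (a := 1 - ν + p) (b := 1 - ν + q) hκ
      (by linarith) (by linarith) hη hηL hL
    rw [show 1 - ν + p + 1 = p + 2 - ν by ring, show 1 - ν + q + 1 = q + 2 - ν by ring] at htail
    refine (intervalIntegral.norm_integral_le_of_norm_le hηL (ae_of_all _ hbound)
      ((intervalIntegrable_brokenPow hη (hη.trans_le hηL)).const_mul M)).trans ?_
    rw [intervalIntegral.integral_const_mul, mul_assoc]
    gcongr
  have houter : ∀ η ∈ Ioc 0 t, ‖η ^ (2 * ν - 1) * ∫ ξ in η..L, ξ ^ (1 - ν) * F ξ‖ ≤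
      M * (2 / κ) * brokenPow (ν + p + 1) (ν + q + 1) η := by
    rintro η ⟨hη, hηt⟩
    rw [Real.norm_eq_abs, abs_mul, abs_of_pos (rpow_pos_of_pos hη _)]
    calc η ^ (2 * ν - 1) * |∫ ξ in η..L, ξ ^ (1 - ν) * F ξ|
        ≤ η ^ (2 * ν - 1) * (M * (2 / κ) * brokenPow (p + 2 - ν) (q + 2 - ν) η) := by
          gcongr
          exact hinner η hη (hηt.trans htL)
      _ = M * (2 / κ) * brokenPow (ν + p + 1) (ν + q + 1) η := by
          rw [mul_left_comm, rpow_mul_brokenPow hη]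
          ring_nf
  have hhead := integral_brokenPow_head_le (a := ν + p + 1) (b := ν + q + 1) hκ
    (by linarith) (by linarith) ht
  rw [show ν + p + 1 + 1 = ν + p + 2 by ring, show ν + q + 1 + 1 = ν + q + 2 by ring] at hhead
  refine (intervalIntegral.norm_integral_le_of_norm_le ht.le (ae_of_all _ houter)
    ((intervalIntegrable_brokenPow_zero (by linarith) ht).const_mul _)).trans ?_
  rw [intervalIntegral.integral_const_mul, mul_assoc (M * (2 / κ))]
  exact mul_le_mul_of_nonneg_left hhead (by positivity)

lemma abs_radialSolution_le (hκ : 0 < κ) (hp : κ ≤ ν - p - 2) (hq : κ ≤ ν - q - 2)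
    (hp' : κ ≤ ν + p + 2) (hq' : κ ≤ ν + q + 2) (hL : 1 ≤ L) (hM : 0 ≤ M)
    (hF : ∀ ξ, 0 < ξ → |F ξ| ≤ M * brokenPow p q ξ) (hr : 0 < r) (hrL : r ≤ L) :
    |radialSolution ν L F r| ≤ 8 * M / κ ^ 2 * brokenPow (p + 2) (q + 2) r := by
  have hL0 : 0 < L := one_pos.trans_le hL
  set K := M * (2 / κ) * (2 / κ) with hK
  have hP : ∀ t, 0 < t → t ≤ L →
      |radialPotential ν L F t| ≤ K * brokenPow (ν + p + 2) (ν + q + 2) t :=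
    fun _ ht htL => abs_radialPotential_le hκ hp hq hp' hq' hL hM hF ht htL
  have hfar : r ^ ν * L ^ (-(2 * ν)) * |radialPotential ν L F L| ≤
      K * brokenPow (p + 2) (q + 2) r :=
    calc r ^ ν * L ^ (-(2 * ν)) * |radialPotential ν L F L|
        ≤ r ^ ν * L ^ (-(2 * ν)) * (K * brokenPow (ν + p + 2) (ν + q + 2) L) := by
          gcongr
          exact hP L hL0 le_rfl
      _ = K * (r ^ ν * brokenPow (p + 2 - ν) (q + 2 - ν) L) := by
          rw [mul_left_comm _ K, mul_assoc (r ^ ν), rpow_mul_brokenPow hL0]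
          ring_nf
      _ ≤ K * (r ^ ν * brokenPow (p + 2 - ν) (q + 2 - ν) r) := by
          gcongr
          exact brokenPow_le_brokenPow_of_nonpos (by linarith) (by linarith) hr hrL
      _ = K * brokenPow (p + 2) (q + 2) r := by
          rw [rpow_mul_brokenPow hr]
          ring_nf
  have hnear : r ^ (-ν) * |radialPotential ν L F r| ≤ K * brokenPow (p + 2) (q + 2) r :=
    calc r ^ (-ν) * |radialPotential ν L F r|
        ≤ r ^ (-ν) * (K * brokenPow (ν + p + 2) (ν + q + 2) r) := by
          gcongr
          exact hP r hr hrL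
      _ = K * brokenPow (p + 2) (q + 2) r := by
          rw [mul_left_comm, rpow_mul_brokenPow hr]
          ring_nf
  calc |radialSolution ν L F r|
      ≤ r ^ ν * L ^ (-(2 * ν)) * |radialPotential ν L F L| +
          r ^ (-ν) * |radialPotential ν L F r| := by
        refine (abs_sub _ _).trans (le_of_eq ?_)
        rw [abs_neg, abs_mul, abs_mul (r ^ (-ν)),
          abs_of_nonneg (by positivity : 0 ≤ r ^ ν * L ^ (-(2 * ν))),
          abs_of_nonneg (by positivity : 0 ≤ r ^ (-ν))]
    _ ≤ 8 * M / κ ^ 2 * brokenPow (p + 2) (q + 2) r := by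
        rw [show 8 * M / κ ^ 2 = 2 * K by rw [hK]; ring]
        linarith

end Radial

@[simp] lemma mk3_apply_zero (a b c : ℝ) : mk3 a b c 0 = a := rfl

@[simp] lemma mk3_apply_two (a b c : ℝ) : mk3 a b c 2 = c := rfl

lemma rx_pos_of_mem_wedgeQ {b₀ : ℝ} {x : V3} (hx : x ∈ wedgeQ b₀) : 0 < rx x :=
  Real.sqrt_pos.2 (by nlinarith [hx.1, sq_nonneg (x 2)])

lemma rx_smul {t : ℝ} (ht : 0 ≤ t) (x : V3) : rx (t • x) = t * rx x := by
  simp only [rx, PiLp.smul_apply, smul_eq_mul]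
  rw [show (t * x 0) ^ 2 + (t * x 2) ^ 2 = t ^ 2 * (x 0 ^ 2 + x 2 ^ 2) by ring,
    Real.sqrt_mul (sq_nonneg t), Real.sqrt_sq ht]

lemma smul_mem_wedgeQ {b₀ t : ℝ} (ht : 0 < t) {x : V3} (hx : x ∈ wedgeQ b₀) :
    t • x ∈ wedgeQ b₀ := by
  change 0 < t * x 0 ∧ b₀ * (t * x 0) < t * x 2
  exact ⟨mul_pos ht hx.1, by nlinarith [hx.2]⟩

lemma rx_polar {r : ℝ} (hr : 0 ≤ r) (θ y₂ : ℝ) :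
    rx (mk3 (r * Real.cos θ) y₂ (r * Real.sin θ)) = r := by
  rw [rx, mk3_apply_zero, mk3_apply_two, show (r * Real.cos θ) ^ 2 + (r * Real.sin θ) ^ 2 = r ^ 2 by
      linear_combination r ^ 2 * Real.sin_sq_add_cos_sq θ]
  exact Real.sqrt_sq hr

lemma mem_closure_wedgeQ {b₀ : ℝ} {x : V3} (h0 : 0 ≤ x 0) (h2 : b₀ * x 0 ≤ x 2) :
    x ∈ closure (wedgeQ b₀) := by
  have hlim : Tendsto (fun t : ℝ => x + t • mk3 1 0 (b₀ + 1)) (𝓝[>] 0) (𝓝 x) := by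
    have hc : Continuous fun t : ℝ => x + t • mk3 1 0 (b₀ + 1) := by fun_prop
    simpa using (hc.tendsto 0).mono_left nhdsWithin_le_nhds
  refine mem_closure_of_tendsto hlim (eventually_nhdsWithin_of_forall fun t (ht : 0 < t) => ?_)
  change 0 < x 0 + t * 1 ∧ b₀ * (x 0 + t * 1) < x 2 + t * (b₀ + 1)
  constructor <;> nlinarith

lemma polar_mem_closure_wedgeQ {b₀ r θ : ℝ} (hr : 0 ≤ r) (hθ₀ : Real.arctan b₀ ≤ θ)
    (hθ : θ ≤ π / 2) (y₂ : ℝ) :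
    mk3 (r * Real.cos θ) y₂ (r * Real.sin θ) ∈ closure (wedgeQ b₀) := by
  have hlow := Real.neg_pi_div_two_lt_arctan b₀
  have hcos : 0 ≤ Real.cos θ := Real.cos_nonneg_of_mem_Icc ⟨by linarith, hθ⟩
  have hsin : 0 ≤ Real.sin (θ - Real.arctan b₀) :=
    Real.sin_nonneg_of_nonneg_of_le_pi (by linarith) (by linarith)
  have htan : Real.sin (Real.arctan b₀) = b₀ * Real.cos (Real.arctan b₀) := by
    rw [Real.sin_arctan, Real.cos_arctan]; ring
  -- `cos θ₀ (sin θ - b₀ cos θ) = sin (θ - θ₀) ≥ 0`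
  have hslope : b₀ * Real.cos θ ≤ Real.sin θ := by
    rw [Real.sin_sub, htan] at hsin
    nlinarith [Real.cos_arctan_pos b₀]
  exact mem_closure_wedgeQ (by rw [mk3_apply_zero]; exact mul_nonneg hr hcos)
    (by rw [mk3_apply_zero, mk3_apply_two]; nlinarith)

lemma abs_le_mul_rpow_neg {r k u M : ℝ} (hr : 0 < r) (h : r ^ k * |u| ≤ M) :
    |u| ≤ M * r ^ (-k) := by
  rwa [rpow_neg hr.le, ← div_eq_mul_inv, le_div_iff₀' (rpow_pos_of_pos hr k)]

lemma abs_le_brokenPow_of_wsupLE {S D : Set V3} {k l M : ℝ} {f : V3 → ℝ} (hk : 0 ≤ k)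
    (hf : wsupLE S 0 k l D f M) {x : V3} (hx : x ∈ D) (hr : 0 < rx x) (hr1 : rx x ≠ 1) :
    |f x| ≤ M * brokenPow (-k) (-l) (rx x) := by
  rcases hr1.lt_or_gt with hr1 | hr1
  · have h := hf.1 0 le_rfl x hx hr hr1
    rw [norm_iteratedFDerivWithin_zero, Real.norm_eq_abs, Nat.cast_zero, add_zero,
      max_eq_left hk] at h
    rw [brokenPow_of_le_one hr1.le]
    exact abs_le_mul_rpow_neg hr h
  · have h := hf.2 0 le_rfl x hx hr1
    rw [norm_iteratedFDerivWithin_zero, Real.norm_eq_abs, Nat.cast_zero, add_zero] at h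
    rw [brokenPow_of_one_le hr1.le]
    exact abs_le_mul_rpow_neg hr h

-- The weighted sup bounds only see `{rx < 1}` and `{rx > 1}` inside `Q`; the circle `rx = 1` and
-- `∂Q` are reached by continuity of `f` on `SQ b₀`.
lemma wedgeQ_subset_closure_rx_ne_one (b₀ : ℝ) :
    wedgeQ b₀ ⊆ closure {x ∈ wedgeQ b₀ | rx x ≠ 1} := by
  intro x hx
  by_cases h1 : rx x = 1
  · have hlim : Tendsto (fun t : ℝ => t • x) (𝓝[<] 1) (𝓝 x) := by
      have hc : Continuous fun t : ℝ => t • x := by fun_prop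
      simpa using (hc.tendsto 1).mono_left nhdsWithin_le_nhds
    refine mem_closure_of_tendsto hlim ?_
    filter_upwards [Ioo_mem_nhdsLT (show (0:ℝ) < 1 from one_pos)] with t ht
    exact ⟨smul_mem_wedgeQ ht.1 hx, by rw [rx_smul ht.1.le, h1, mul_one]; exact ht.2.ne⟩
  · exact subset_closure ⟨hx, h1⟩

lemma abs_le_brokenPow_of_mem_closure_wedgeQ {b₀ k l M : ℝ} {f : V3 → ℝ} (hk : 0 ≤ k)
    (hc : ContinuousOn f (SQ b₀)) (hf : wsupLE (SQ b₀) 0 k l (wedgeQ b₀) f M)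
    {x : V3} (hx : x ∈ closure (wedgeQ b₀)) (hr : 0 < rx x) :
    |f x| ≤ M * brokenPow (-k) (-l) (rx x) := by
  set A := {x ∈ wedgeQ b₀ | rx x ≠ 1}
  have hxA : x ∈ closure A :=
    closure_minimal (wedgeQ_subset_closure_rx_ne_one b₀) isClosed_closure hx
  have hxS : x ∈ SQ b₀ := ⟨hx, fun he => by simp [rx, he.1, he.2] at hr⟩
  have hAS : A ⊆ SQ b₀ := fun y hy =>
    ⟨subset_closure hy.1, fun he => (rx_pos_of_mem_wedgeQ hy.1).ne' (by simp [rx, he.1, he.2])⟩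
  refine ContinuousWithinAt.closure_le hxA ((hc x hxS).mono hAS).abs ?_
    (fun y hy => abs_le_brokenPow_of_wsupLE hk hf hy.1 (rx_pos_of_mem_wedgeQ hy.1) hy.2)
  have hrx : Continuous rx := by unfold rx; fun_prop
  exact (continuousAt_const.mul ((continuousAt_brokenPow hr).comp
    hrx.continuousAt)).continuousWithinAt

lemma abs_fm0_le {b₀ r B : ℝ} {f : V3 → ℝ} (m : ℕ)
    (hB : ∀ θ ∈ Icc (Real.arctan b₀) (π / 2), ∀ y₂, |fPolar f r θ y₂| ≤ B) :
    |fm0 b₀ f m r| ≤ 2 * B := by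
  have hβ : 0 < π / 2 - Real.arctan b₀ := sub_pos.2 (Real.arctan_lt_pi_div_two b₀)
  have hinner : ∀ θ ∈ uIoc (Real.arctan b₀) (π / 2),
      ‖∫ y₂ in (0:ℝ)..(2 * π), fPolar f r θ y₂ * Real.cos (sqrtmu b₀ m * (θ - Real.arctan b₀))‖
        ≤ B * |2 * π - 0| := by
    intro θ hθ
    rw [uIoc_of_le (sub_nonneg.1 hβ.le)] at hθ
    refine intervalIntegral.norm_integral_le_of_norm_le_const fun y₂ _ => ?_
    rw [norm_mul, Real.norm_eq_abs, Real.norm_eq_abs]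
    exact (mul_le_of_le_one_right (abs_nonneg _) (Real.abs_cos_le_one _)).trans
      (hB θ (Ioc_subset_Icc_self hθ) y₂)
  have houter := intervalIntegral.norm_integral_le_of_norm_le_const hinner
  rw [fm0, abs_mul, abs_of_pos (by positivity), ← Real.norm_eq_abs]
  calc (π * (π / 2 - Real.arctan b₀))⁻¹ * ‖_‖
      ≤ (π * (π / 2 - Real.arctan b₀))⁻¹ * (B * |2 * π - 0| * |π / 2 - Real.arctan b₀|) := by
        gcongr
    _ = 2 * B := by
        rw [sub_zero, abs_of_pos Real.two_pi_pos, abs_of_pos hβ, inv_mul_eq_iff_eq_mul₀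
          (mul_pos Real.pi_pos hβ).ne']
        ring

lemma abs_fm0_le_brokenPow {b₀ k l M r : ℝ} {f : V3 → ℝ} (hk : 0 ≤ k)
    (hc : ContinuousOn f (SQ b₀)) (hf : wsupLE (SQ b₀) 0 k l (wedgeQ b₀) f M) (m : ℕ)
    (hr : 0 < r) : |fm0 b₀ f m r| ≤ 2 * M * brokenPow (-k) (-l) r := by
  rw [mul_assoc]
  refine abs_fm0_le m fun θ hθ y₂ => ?_
  have h := abs_le_brokenPow_of_mem_closure_wedgeQ hk hc hf
    (polar_mem_closure_wedgeQ hr.le hθ.1 hθ.2 y₂) (by rwa [rx_polar hr.le])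
  rwa [rx_polar hr.le] at h

lemma sqrtmu_eq_mul (b₀ : ℝ) (m : ℕ) : sqrtmu b₀ m = m * sqrtmu b₀ 1 := by
  simp only [sqrtmu, Nat.cast_one, one_mul]
  ring

lemma two_lt_sqrtmu_one {b₀ : ℝ} (hb₀ : 0 < b₀) : 2 < sqrtmu b₀ 1 := by
  have h0 : 0 < Real.arctan b₀ := by simpa using Real.arctan_strictMono hb₀
  have hβ : 0 < π / 2 - Real.arctan b₀ := sub_pos.2 (Real.arctan_lt_pi_div_two b₀)
  rw [sqrtmu, Nat.cast_one, one_mul, lt_div_iff₀ hβ]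
  linarith

lemma abs_Rm0_le {b₀ L M p q r : ℝ} {f : V3 → ℝ} (hb₀ : 0 < b₀) (hp : p ∈ Icc (-4 : ℝ) 0)
    (hq : q ∈ Icc (-4 : ℝ) 0) (hL : 1 ≤ L) (hM : 0 ≤ M)
    (hF : ∀ m ξ, 0 < ξ → |fm0 b₀ f m ξ| ≤ M * brokenPow p q ξ) (m : ℕ) (hr : 0 < r)
    (hrL : r ≤ L) :
    |Rm0 b₀ L f (m + 1) r| ≤
      8 * M / (sqrtmu b₀ 1 - 2) ^ 2 * brokenPow (p + 2) (q + 2) r / ((m : ℝ) + 1) ^ 2 := by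
  have hν1 := two_lt_sqrtmu_one hb₀
  have hν : sqrtmu b₀ (m + 1) = ((m : ℝ) + 1) * sqrtmu b₀ 1 := by
    rw [sqrtmu_eq_mul, Nat.cast_succ]
  have hgap : ((m : ℝ) + 1) * (sqrtmu b₀ 1 - 2) ≤ sqrtmu b₀ (m + 1) - 2 := by
    rw [hν]; nlinarith [(m.cast_nonneg : (0 : ℝ) ≤ m)]
  have hgap0 : 0 < ((m : ℝ) + 1) * (sqrtmu b₀ 1 - 2) := by
    have : 0 < sqrtmu b₀ 1 - 2 := by linarith
    positivity
  have hR := abs_radialSolution_le (κ := sqrtmu b₀ (m + 1) - 2) (hgap0.trans_le hgap)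
    (by linarith [hp.2]) (by linarith [hq.2]) (by linarith [hp.1]) (by linarith [hq.1]) hL hM
    (hF (m + 1)) hr hrL
  have hweight := brokenPow_nonneg (a := p + 2) (b := q + 2) hr.le
  calc |Rm0 b₀ L f (m + 1) r|
      ≤ 8 * M / (sqrtmu b₀ (m + 1) - 2) ^ 2 * brokenPow (p + 2) (q + 2) r := hR
    _ ≤ 8 * M / (((m : ℝ) + 1) * (sqrtmu b₀ 1 - 2)) ^ 2 * brokenPow (p + 2) (q + 2) r := by
        gcongr
    _ = 8 * M / (sqrtmu b₀ 1 - 2) ^ 2 * brokenPow (p + 2) (q + 2) r / ((m : ℝ) + 1) ^ 2 := by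
        rw [mul_pow, ← div_div]
        ring

lemma abs_Rm0_le_of_wsupLE {b₀ δ δ₀ L M r : ℝ} {f : V3 → ℝ} (hb₀ : 0 < b₀)
    (hδ : δ ∈ Icc (-3 : ℝ) 1) (hδ₀ : δ₀ ∈ Icc (-2 : ℝ) 2) (hL : 1 ≤ L) (hM : 0 ≤ M)
    (hc : ContinuousOn f (SQ b₀)) (hf : wsupLE (SQ b₀) 0 (1 - δ) (2 - δ₀) (wedgeQ b₀) f M)
    (m : ℕ) (hr : 0 < r) (hrL : r ≤ L) :
    |Rm0 b₀ L f (m + 1) r| ≤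
      16 * M / (sqrtmu b₀ 1 - 2) ^ 2 * brokenPow (δ + 1) δ₀ r / ((m : ℝ) + 1) ^ 2 := by
  have hF : ∀ m ξ, 0 < ξ → |fm0 b₀ f m ξ| ≤ 2 * M * brokenPow (δ - 1) (δ₀ - 2) ξ := by
    intro m ξ hξ
    simpa only [neg_sub] using abs_fm0_le_brokenPow (by linarith [hδ.2]) hc hf m hξ
  convert abs_Rm0_le hb₀ ⟨by linarith [hδ.1], by linarith [hδ.2]⟩
    ⟨by linarith [hδ₀.1], by linarith [hδ₀.2]⟩ hL (by positivity) hF m hr hrL using 3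
  · ring
  · congr 1 <;> ring

/-- Lemma A.1: the series `I₁ = Σ_{m≥1} R_{m0}(r) cos(√μ_m(θ − θ₀))` converges absolutely and
`‖I₁‖^{(0,−δ₀)}_{0;Q_L} ≤ C‖f‖^{(1−δ,2−δ₀)}_{0,α;Q}` with `C` independent of `L` and `f`. -/
theorem stmt17 (b₀ δ δ₀ : ℝ) (hb₀ : 0 < b₀)
    (hδ0 : 0 < δ) (hδ1 : δ < 1) (hδ₀0 : 0 < δ₀) (hδ₀1 : δ₀ < 1) :
    ∃ C : ℝ, 0 < C ∧
      ∀ α : ℝ, 0 < α → α < 1 →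
      ∀ L : ℝ, 4 ≤ L →
      ∀ (f : V3 → ℝ) (Mf : ℝ), 0 ≤ Mf →
        ContinuousOn f (SQ b₀) →
        wnormLE (SQ b₀) 0 α (1 - δ) (2 - δ₀) (wedgeQ b₀) f Mf →
        Per2On (closure (wedgeQ b₀)) f →
        (∀ r : ℝ, 0 < r → r ≤ L →
            Summable fun m : ℕ => |Rm0 b₀ L f (m + 1) r|) ∧
        (∀ r θ : ℝ, 0 < r → r ≤ 1 → Real.arctan b₀ ≤ θ → θ ≤ Real.pi / 2 →
            |∑' m : ℕ, Rm0 b₀ L f (m + 1) r *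
                Real.cos (sqrtmu b₀ (m + 1) * (θ - Real.arctan b₀))| ≤ C * Mf) ∧
        (∀ r θ : ℝ, 1 < r → r ≤ L → Real.arctan b₀ ≤ θ → θ ≤ Real.pi / 2 →
            r ^ (-δ₀) * |∑' m : ℕ, Rm0 b₀ L f (m + 1) r *
                Real.cos (sqrtmu b₀ (m + 1) * (θ - Real.arctan b₀))| ≤ C * Mf) := by
  have hgap : 0 < sqrtmu b₀ 1 - 2 := sub_pos.2 (two_lt_sqrtmu_one hb₀)
  set C := 16 / (sqrtmu b₀ 1 - 2) ^ 2 * (π ^ 2 / 6)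
  refine ⟨C, by positivity, fun α _ _ L hL f Mf hMf hc hnorm _ => ?_⟩
  have hmode := fun (r : ℝ) (hr : 0 < r) (hrL : r ≤ L) (m : ℕ) =>
    abs_Rm0_le_of_wsupLE hb₀ ⟨by linarith, hδ1.le⟩ ⟨by linarith, by linarith⟩ (by linarith) hMf hc
      hnorm.1 m hr hrL
  have hI : ∀ r θ, 0 < r → r ≤ L →
      |∑' m : ℕ, Rm0 b₀ L f (m + 1) r * Real.cos (sqrtmu b₀ (m + 1) * (θ - Real.arctan b₀))| ≤
        C * Mf * brokenPow (δ + 1) δ₀ r := fun r θ hr hrL =>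
    (abs_tsum_mul_le_of_abs_le_div_succ_sq (hmode r hr hrL) fun _ => abs_cos_le_one _).trans_eq
      (by ring)
  refine ⟨fun r hr hrL => summable_abs_of_abs_le_div_succ_sq (hmode r hr hrL),
    fun r θ hr hr1 _ _ => ?_, fun r θ hr1 hrL _ _ => ?_⟩
  · have hweight : brokenPow (δ + 1) δ₀ r ≤ 1 := by
      rw [brokenPow_of_le_one hr1]
      exact rpow_le_one hr.le hr1 (by linarith)
    exact (hI r θ hr (by linarith)).trans (mul_le_of_le_one_right (by positivity) hweight)
  · have hr : 0 < r := one_pos.trans hr1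
    calc r ^ (-δ₀) * |∑' m : ℕ, Rm0 b₀ L f (m + 1) r *
            Real.cos (sqrtmu b₀ (m + 1) * (θ - Real.arctan b₀))|
        ≤ r ^ (-δ₀) * (C * Mf * brokenPow (δ + 1) δ₀ r) := by gcongr; exact hI r θ hr hrL
      _ = C * Mf := by
        rw [brokenPow_of_one_le hr1.le, mul_left_comm, ← rpow_add hr, neg_add_cancel, rpow_zero,
          mul_one]
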